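/- Let α : C → D be a left coflat morphism of semiperfect K-coalgebras, let κ' ≥ max{|K|, ℵ₀}, let M be a right D-comodule and A ⊆ α_* M = M □_D C a subset with |A| ≤ κ'. Then there exists a D-subcomodule N ⊆ M with |N| ≤ κ' such that A ⊆ α_* N ⊆ α_* M. -/

import Mathlib

open TensorProduct CategoryTheory CategoryTheory.Limits

universe u

set_option maxHeartbeats 1000000
noncomputable section

namespace Formal

variable (K : Type u) [Field K]

structure Comod (C : Type u) [AddCommGroup C] [Module K C] [Coalgebra K C] :
    Type (u + 1) where
  carrier : Type u
  [acg : AddCommGroup carrier]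
  [mod : Module K carrier]
  ρ : carrier →ₗ[K] carrier ⊗[K] C
  counit_comp' :
    (TensorProduct.rid K carrier).toLinearMap ∘ₗ
      LinearMap.lTensor carrier (Coalgebra.counit (R := K) (A := C)) ∘ₗ ρ = LinearMap.id
  coassoc' :
    (TensorProduct.assoc K carrier C C).toLinearMap ∘ₗ LinearMap.rTensor C ρ ∘ₗ ρ =
      LinearMap.lTensor carrier (Coalgebra.comul (R := K) (A := C)) ∘ₗ ρ

attribute [instance] Comod.acg Comod.mod

variable {K}
variable {C D E : Type u}
  [AddCommGroup C] [Module K C] [Coalgebra K C]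
  [AddCommGroup D] [Module K D] [Coalgebra K D]
  [AddCommGroup E] [Module K E] [Coalgebra K E]

@[ext]
structure ComodHom (M N : Comod K C) : Type u where
  f : M.carrier →ₗ[K] N.carrier
  compat : N.ρ ∘ₗ f = LinearMap.rTensor C f ∘ₗ M.ρ

instance : Category (Comod K C) where
  Hom := ComodHom
  id M := ⟨LinearMap.id, by rw [LinearMap.comp_id, LinearMap.rTensor_id, LinearMap.id_comp]⟩
  comp {M N P} g h :=
    ⟨h.f ∘ₗ g.f, by
      rw [← LinearMap.comp_assoc, h.compat, LinearMap.comp_assoc, g.compat,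
        ← LinearMap.comp_assoc, ← LinearMap.rTensor_comp]⟩
  id_comp f := by apply ComodHom.ext; exact LinearMap.comp_id _
  comp_id f := by apply ComodHom.ext; exact LinearMap.id_comp _
  assoc f g h := by apply ComodHom.ext; exact (LinearMap.comp_assoc _ _ _).symm

@[simp] lemma ComodHom.id_f (M : Comod K C) : (𝟙 M : M ⟶ M).f = LinearMap.id := rfl

@[simp] lemma ComodHom.comp_f {M N P : Comod K C} (g : M ⟶ N) (h : N ⟶ P) :
    (g ≫ h).f = h.f ∘ₗ g.f := rfl

section Cores

variable (α : C →ₗc[K] D) (M : Comod K C)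

/-- The coaction of the corestricted comodule. -/
def coresρ : M.carrier →ₗ[K] M.carrier ⊗[K] D :=
  LinearMap.lTensor M.carrier α.toLinearMap ∘ₗ M.ρ

lemma cores_counit :
    (TensorProduct.rid K M.carrier).toLinearMap ∘ₗ
      LinearMap.lTensor M.carrier (Coalgebra.counit (R := K) (A := D)) ∘ₗ coresρ α M =
      LinearMap.id := by
  rw [coresρ, ← LinearMap.comp_assoc M.ρ, ← LinearMap.lTensor_comp, α.counit_comp]
  exact M.counit_comp'

lemma cores_coassoc :
    (TensorProduct.assoc K M.carrier D D).toLinearMap ∘ₗ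
      LinearMap.rTensor D (coresρ α M) ∘ₗ coresρ α M =
      LinearMap.lTensor M.carrier (Coalgebra.comul (R := K) (A := D)) ∘ₗ coresρ α M := by
  set A := α.toLinearMap
  have h1 : LinearMap.rTensor D (coresρ α M) ∘ₗ coresρ α M =
      (TensorProduct.map (LinearMap.lTensor M.carrier A) A ∘ₗ LinearMap.rTensor C M.ρ) ∘ₗ M.ρ := by
    rw [LinearMap.map_comp_rTensor]
    rw [coresρ, ← LinearMap.comp_assoc M.ρ, LinearMap.rTensor_comp_lTensor]
  have h2 : (TensorProduct.assoc K M.carrier D D).toLinearMap ∘ₗ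
      TensorProduct.map (LinearMap.lTensor M.carrier A) A =
      LinearMap.lTensor M.carrier (TensorProduct.map A A) ∘ₗ
        (TensorProduct.assoc K M.carrier C C).toLinearMap := by
    have := TensorProduct.map_map_comp_assoc_eq (R := K)
      (f := (LinearMap.id : M.carrier →ₗ[K] M.carrier)) (g := A) (h := A)
    calc (TensorProduct.assoc K M.carrier D D).toLinearMap ∘ₗ
        TensorProduct.map (LinearMap.lTensor M.carrier A) A
        = (TensorProduct.assoc K M.carrier D D).toLinearMap ∘ₗ
            TensorProduct.map (TensorProduct.map LinearMap.id A) A := rfl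
      _ = TensorProduct.map LinearMap.id (TensorProduct.map A A) ∘ₗ
            (TensorProduct.assoc K M.carrier C C).toLinearMap := this.symm
      _ = LinearMap.lTensor M.carrier (TensorProduct.map A A) ∘ₗ
            (TensorProduct.assoc K M.carrier C C).toLinearMap := rfl
  conv_lhs => rw [h1]
  simp only [← LinearMap.comp_assoc]
  rw [h2]
  simp only [LinearMap.comp_assoc]
  rw [M.coassoc', ← LinearMap.comp_assoc, ← LinearMap.lTensor_comp, α.map_comp_comul,
    LinearMap.lTensor_comp, LinearMap.comp_assoc]
  rfl

/-- Corestriction of scalars along a coalgebra morphism, as a functor. -/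
def cores : Comod K C ⥤ Comod K D where
  obj M :=
    { carrier := M.carrier
      ρ := coresρ α M
      counit_comp' := cores_counit α M
      coassoc' := cores_coassoc α M }
  map {M N} f := ⟨f.f, by
    show coresρ α N ∘ₗ f.f = LinearMap.rTensor D f.f ∘ₗ coresρ α M
    rw [coresρ, coresρ, LinearMap.comp_assoc, f.compat, ← LinearMap.comp_assoc,
      ← LinearMap.comp_assoc, LinearMap.lTensor_comp_rTensor, LinearMap.rTensor_comp_lTensor]⟩
  map_id M := by apply ComodHom.ext; rfl
  map_comp f g := by apply ComodHom.ext; rfl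

@[simp] lemma cores_obj_carrier (M : Comod K C) : ((cores α).obj M).carrier = M.carrier := rfl
@[simp] lemma cores_map_f {M N : Comod K C} (f : M ⟶ N) : ((cores α).map f).f = f.f := rfl

end Cores

/-- The left coaction of `C` as a left `D`-comodule via `α`. -/
def lcoaction (α : C →ₗc[K] D) : C →ₗ[K] D ⊗[K] C :=
  LinearMap.rTensor C α.toLinearMap ∘ₗ Coalgebra.comul

/-- The cotensor product `N □_D C` as a submodule of `N ⊗ C`. -/
def cotensor (α : C →ₗc[K] D) (N : Comod K D) : Submodule K (N.carrier ⊗[K] C) :=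
  LinearMap.ker
    ((TensorProduct.assoc K N.carrier D C).toLinearMap ∘ₗ LinearMap.rTensor C N.ρ -
      LinearMap.lTensor N.carrier (lcoaction α))


section Rep

variable {X : Type u} [SmallCategory X]
variable (K)
variable (Cx : X → Type u) [∀ x, AddCommGroup (Cx x)] [∀ x, Module K (Cx x)]
  [∀ x, Coalgebra K (Cx x)]
variable (F : ∀ {x y : X}, (x ⟶ y) → (Cx x →ₗc[K] Cx y))

/-- A cis-comodule over a coalgebra representation. -/
structure Cis : Type (u + 1) where
  M : ∀ x, Comod K (Cx x)
  str : ∀ {x y : X} (a : x ⟶ y), (cores (F a)).obj (M x) ⟶ M y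
  str_id : ∀ x, (str (𝟙 x)).f = LinearMap.id
  str_comp : ∀ {x y z : X} (a : x ⟶ y) (b : y ⟶ z),
    (str (a ≫ b)).f = (str b).f ∘ₗ (str a).f

/-- A trans-comodule over a coalgebra representation (via the corestriction-side
structure maps `_αM : M_y → α^* M_x` for `α : x ⟶ y`). -/
structure Trans : Type (u + 1) where
  M : ∀ x, Comod K (Cx x)
  str : ∀ {x y : X} (a : x ⟶ y), M y ⟶ (cores (F a)).obj (M x)
  str_id : ∀ x, (str (𝟙 x)).f = LinearMap.id
  str_comp : ∀ {x y z : X} (a : x ⟶ y) (b : y ⟶ z),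
    (str (a ≫ b)).f = (str a).f ∘ₗ (str b).f

variable {K Cx F}

@[ext]
structure CisHom (P Q : Cis K Cx (F := @F)) : Type u where
  η : ∀ x, P.M x ⟶ Q.M x
  nat : ∀ {x y : X} (a : x ⟶ y), (η y).f ∘ₗ (P.str a).f = (Q.str a).f ∘ₗ (η x).f

@[ext]
structure TransHom (P Q : Trans K Cx (F := @F)) : Type u where
  η : ∀ x, P.M x ⟶ Q.M x
  nat : ∀ {x y : X} (a : x ⟶ y), (η x).f ∘ₗ (P.str a).f = (Q.str a).f ∘ₗ (η y).f

instance : Category (Cis K Cx (F := @F)) where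
  Hom := CisHom
  id P := ⟨fun x => 𝟙 (P.M x), fun a => by
    simp only [ComodHom.id_f, LinearMap.id_comp, LinearMap.comp_id]; rfl⟩
  comp g h := ⟨fun x => g.η x ≫ h.η x, fun {x y} a => by
    simp only [ComodHom.comp_f]
    exact (congrArg ((h.η y).f ∘ₗ ·) (g.nat a)).trans (congrArg (· ∘ₗ (g.η x).f) (h.nat a))⟩
  id_comp f := by apply CisHom.ext; funext x; exact Category.id_comp _
  comp_id f := by apply CisHom.ext; funext x; exact Category.comp_id _
  assoc f g h := by apply CisHom.ext; funext x; exact Category.assoc _ _ _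

instance : Category (Trans K Cx (F := @F)) where
  Hom := TransHom
  id P := ⟨fun x => 𝟙 (P.M x), fun a => by
    simp only [ComodHom.id_f, LinearMap.id_comp, LinearMap.comp_id]; rfl⟩
  comp g h := ⟨fun x => g.η x ≫ h.η x, fun {x y} a => by
    simp only [ComodHom.comp_f]
    exact (congrArg ((h.η x).f ∘ₗ ·) (g.nat a)).trans (congrArg (· ∘ₗ (g.η y).f) (h.nat a))⟩
  id_comp f := by apply TransHom.ext; funext x; exact Category.id_comp _
  comp_id f := by apply TransHom.ext; funext x; exact Category.comp_id _
  assoc f g h := by apply TransHom.ext; funext x; exact Category.assoc _ _ _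

@[simp] lemma CisHom.id_η (P : Cis K Cx (F := @F)) (x : X) :
    (𝟙 P : P ⟶ P).η x = 𝟙 (P.M x) := rfl

@[simp] lemma CisHom.comp_η {P Q R : Cis K Cx (F := @F)} (g : P ⟶ Q) (h : Q ⟶ R) (x : X) :
    (g ≫ h).η x = g.η x ≫ h.η x := rfl

@[simp] lemma TransHom.id_η (P : Trans K Cx (F := @F)) (x : X) :
    (𝟙 P : P ⟶ P).η x = 𝟙 (P.M x) := rfl

@[simp] lemma TransHom.comp_η {P Q R : Trans K Cx (F := @F)} (g : P ⟶ Q) (h : Q ⟶ R) (x : X) :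
    (g ≫ h).η x = g.η x ≫ h.η x := rfl

variable (K Cx F)

/-- Evaluation of cis-comodules at an object. -/
def evCis (x : X) : Cis K Cx (F := @F) ⥤ Comod K (Cx x) where
  obj P := P.M x
  map g := g.η x
  map_id _ := rfl
  map_comp _ _ := rfl

/-- Evaluation of trans-comodules at an object. -/
def evTrans (x : X) : Trans K Cx (F := @F) ⥤ Comod K (Cx x) where
  obj P := P.M x
  map g := g.η x
  map_id _ := rfl
  map_comp _ _ := rfl

end Rep

end Formal
end

namespace Formal


section Aux

open Cardinal

private lemma mem_range_rTensor_of_finset {K M V : Type u} [Field K] [AddCommGroup M]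
    [Module K M] [AddCommGroup V] [Module K V] (N : Submodule K M) (s : Finset (M × V))
    (hs : ∀ p ∈ s, p.1 ∈ N) :
    (∑ p ∈ s, p.1 ⊗ₜ[K] p.2) ∈ LinearMap.range (LinearMap.rTensor V N.subtype) := by
  refine ⟨∑ p ∈ s.attach, (⟨p.1.1, hs p.1 p.2⟩ : N) ⊗ₜ[K] p.1.2, ?_⟩
  rw [map_sum, ← Finset.sum_attach s fun p => p.1 ⊗ₜ[K] p.2]
  simp [LinearMap.rTensor_tmul]

private lemma mk_span_le' {K M : Type u} [Field K] [AddCommGroup M] [Module K M] (S : Set M) :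
    Cardinal.mk (Submodule.span K S) ≤ max (max (Cardinal.mk S) (Cardinal.mk K)) Cardinal.aleph0 := by
  have h1 : Cardinal.mk (Submodule.span K S) ≤ Cardinal.mk (S →₀ K) := by
    have h : (Submodule.span K S : Set M) =
        Set.range (Finsupp.linearCombination K ((↑) : S → M)) := by
      rw [← LinearMap.coe_range, Finsupp.range_linearCombination, Subtype.range_coe]
    calc #(Submodule.span K S) = #((Submodule.span K S : Set M)) := rfl
      _ = #(Set.range (Finsupp.linearCombination K ((↑) : S → M))) := by rw [h]
      _ ≤ _ := Cardinal.mk_range_le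
  refine h1.trans ?_
  cases fintypeOrInfinite S with
  | inl _ =>
    rw [Cardinal.mk_finsupp_of_fintype, ← Cardinal.power_natCast]
    exact Cardinal.power_nat_le_max.trans
      (max_le_max (le_max_right _ _) le_rfl)
  | inr _ =>
    rw [Cardinal.mk_finsupp_of_infinite]
    exact le_max_left _ _

end Aux

/-- for a left coflat morphism `α : C → D` of semiperfect coalgebras, any
subset `A` of `α_* M = M □_D C` of cardinality at most `κ' ≥ max {|K|, ℵ₀}` is contained in
`α_* N` for some `D`-subcomodule `N ⊆ M` of cardinality at most `κ'`. -/
theorem coinduction_small_subcomodule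
    {K : Type u} [Field K] {C D : Type u}
    [AddCommGroup C] [Module K C] [Coalgebra K C]
    [AddCommGroup D] [Module K D] [Coalgebra K D] (α : C →ₗc[K] D)
    (hC : EnoughProjectives (Comod K C)) (hD : EnoughProjectives (Comod K D))
    (hcoflat : ∀ (N N' : Comod K D) (g : N ⟶ N'), Function.Surjective g.f →
      ∀ t ∈ cotensor α N', ∃ s ∈ cotensor α N, LinearMap.rTensor C g.f s = t)
    (κ' : Cardinal.{u}) (hκ : max (Cardinal.mk K) Cardinal.aleph0 ≤ κ')
    (M : Comod K D) (A : Set (M.carrier ⊗[K] C))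
    (hA : A ⊆ (cotensor α M : Set (M.carrier ⊗[K] C)))
    (hAcard : Cardinal.mk A ≤ κ') :
    ∃ N : Submodule K M.carrier,
      (∀ n ∈ N, M.ρ n ∈ LinearMap.range (LinearMap.rTensor D N.subtype)) ∧
      Cardinal.mk N ≤ κ' ∧
      ∀ a ∈ A, a ∈ LinearMap.range (LinearMap.rTensor C N.subtype) := by
  classical
  choose U hU using fun y : M.carrier ⊗[K] C => TensorProduct.exists_finset (R := K) y
  choose T hT using fun x : M.carrier ⊗[K] D => TensorProduct.exists_finset (R := K) x
  set step : Set M.carrier → Set M.carrier :=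
    fun S => S ∪ ⋃ m ∈ S, ((T (M.ρ m)).image Prod.fst : Set M.carrier) with hstep
  set S : ℕ → Set M.carrier :=
    fun n => step^[n] (⋃ a ∈ A, ((U a).image Prod.fst : Set M.carrier)) with hSdef
  have hS_succ : ∀ n, S (n + 1) = step (S n) := fun n =>
    Function.iterate_succ_apply' step n _
  set Stot : Set M.carrier := ⋃ n, S n with hStot
  set N : Submodule K M.carrier := Submodule.span K Stot with hN
  have hStotN : Stot ⊆ (N : Set M.carrier) := Submodule.subset_span
  have hκℵ : Cardinal.aleph0 ≤ κ' := le_trans (le_max_right _ _) hκ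
  have hκK : Cardinal.mk K ≤ κ' := le_trans (le_max_left _ _) hκ
  refine ⟨N, ?_, ?_, ?_⟩
  · intro n hn
    have hle : N ≤ Submodule.comap M.ρ (LinearMap.range (LinearMap.rTensor D N.subtype)) := by
      rw [hN, Submodule.span_le]
      intro m hm
      obtain ⟨k, hk⟩ := Set.mem_iUnion.mp hm
      simp only [SetLike.mem_coe, Submodule.mem_comap]
      rw [hT (M.ρ m)]
      apply mem_range_rTensor_of_finset
      intro p hp
      apply hStotN
      refine Set.mem_iUnion.mpr ⟨k + 1, ?_⟩
      rw [hS_succ]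
      exact Or.inr (Set.mem_biUnion hk (Finset.mem_coe.mpr (Finset.mem_image_of_mem _ hp)))
    exact hle hn
  · -- cardinality
    have hfin : ∀ (s : Finset M.carrier), Cardinal.mk (s : Set M.carrier) ≤ Cardinal.aleph0 :=
      fun s => Cardinal.mk_le_aleph0
    have hcard : ∀ n, Cardinal.mk (S n) ≤ κ' := by
      intro n
      induction n with
      | zero =>
        simp only [hSdef, Function.iterate_zero, id]
        refine le_trans (Cardinal.mk_biUnion_le _ _) ?_
        refine le_trans (Cardinal.mul_le_max _ _) ?_
        refine max_le (max_le ?_ ?_) hκℵ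
        · exact hAcard
        · exact le_trans (ciSup_le' fun m => hfin _) hκℵ
      | succ k ih =>
        rw [hS_succ]
        refine le_trans (Cardinal.mk_union_le _ _) ?_
        have h2 : Cardinal.mk (⋃ m ∈ S k, ((T (M.ρ m)).image Prod.fst : Set M.carrier)) ≤ κ' := by
          refine le_trans (Cardinal.mk_biUnion_le _ _) ?_
          refine le_trans (Cardinal.mul_le_max _ _) ?_
          exact max_le (max_le ih (le_trans (ciSup_le' fun m => hfin _) hκℵ)) hκℵ
        calc Cardinal.mk (S k) + _ ≤ κ' + κ' := add_le_add ih h2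
          _ = κ' := Cardinal.add_eq_self hκℵ
    have hStot_card : Cardinal.mk Stot ≤ κ' := by
      have hreix : (⋃ n, S n) = ⋃ k : ULift.{u} ℕ, S k.down := by
        ext x
        simp only [Set.mem_iUnion]
        exact ⟨fun ⟨n, h⟩ => ⟨⟨n⟩, h⟩, fun ⟨k, h⟩ => ⟨k.down, h⟩⟩
      rw [hStot, hreix]
      refine le_trans (Cardinal.mk_iUnion_le _) ?_
      refine le_trans (Cardinal.mul_le_max _ _) ?_
      exact max_le (max_le (le_trans Cardinal.mk_le_aleph0 hκℵ)
        (ciSup_le' fun k => hcard k.down)) hκℵ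
    exact le_trans (mk_span_le' Stot) (max_le (max_le hStot_card hκK) hκℵ)
  · intro a ha
    rw [hU a]
    apply mem_range_rTensor_of_finset
    intro p hp
    apply hStotN
    refine Set.mem_iUnion.mpr ⟨0, ?_⟩
    simp only [hSdef, Function.iterate_zero, id]
    exact Set.mem_biUnion ha (Finset.mem_coe.mpr (Finset.mem_image_of_mem _ hp))


end Formal
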